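/- (Parametric system, entanglement bound is tight.) Fix N ≥ 0 and 0 ≤ χ < 1/2, set M = [[0,σz],[σz,0]], A = −(1/2)𝟙₄ + χM, D = (1+2N)𝟙₄, and let r ≥ 0 be defined by e^{2r} = (1+2N)/(1−2χ). The pure two-mode squeezed covariance matrix σ = [[c𝟙₂, s σz],[s σz, c𝟙₂]] with c = cosh(2r) and s = sinh(2r) satisfies σ + iΩ ≥ 0 with det σ = 1, satisfies the stabilising Lyapunov inequality Aσ + σAᵀ + D ≥ 0, and has smallest partially transposed symplectic eigenvalue ν̃₋ = e^{−2r} = (1−2χ)/(1+2N) for the 1 vs 1 bipartition; hence its logarithmic negativity equals log₂(1+2N) − log₂(1−2χ), saturating the bound. -/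

import Mathlib

open Matrix
open scoped ComplexOrder

open Classical in
/-- The eigenvalues of a matrix in increasing order (junk value `0` if not Hermitian). -/
noncomputable def eigUp {d : ℕ} (M : Matrix (Fin d) (Fin d) ℝ) : Fin d → ℝ :=
  if h : M.IsHermitian then h.eigenvalues ∘ Tuple.sort h.eigenvalues else 0

/-- The eigenvalues of a matrix in decreasing order. -/
noncomputable def eigDown {d : ℕ} (M : Matrix (Fin d) (Fin d) ℝ) (j : Fin d) : ℝ :=
  eigUp M j.rev

/-- The standard symplectic form on `2n` canonical variables: block diagonal with
blocks `[[0,1],[-1,0]]`. -/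
def Omega (n : ℕ) : Matrix (Fin (2*n)) (Fin (2*n)) ℝ :=
  Matrix.of fun i j =>
    if (i : ℕ) + 1 = (j : ℕ) ∧ (i : ℕ) % 2 = 0 then 1
    else if (j : ℕ) + 1 = (i : ℕ) ∧ (j : ℕ) % 2 = 0 then -1 else 0

/-- Partial transposition matrix `T = 𝟙₂^{⊕ l} ⊕ σz^{⊕ (n-l)}` for the bipartition of the
first `l` versus the last `n - l` modes. -/
def Tmat (n l : ℕ) : Matrix (Fin (2*n)) (Fin (2*n)) ℝ :=
  Matrix.diagonal fun i => if (i : ℕ) / 2 < l ∨ (i : ℕ) % 2 = 0 then 1 else -1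

/-- The partially transposed symplectic form `Ω̃ = T Ω T`. -/
def OmegaPT (n l : ℕ) : Matrix (Fin (2*n)) (Fin (2*n)) ℝ :=
  Tmat n l * Omega n * Tmat n l

open Classical in
/-- The positive square root of a positive semidefinite matrix (junk value `0` otherwise). -/
noncomputable def msqrt {d : ℕ} (M : Matrix (Fin d) (Fin d) ℝ) : Matrix (Fin d) (Fin d) ℝ :=
  if h : M.PosSemidef then
    (h.1.eigenvectorUnitary : Matrix (Fin d) (Fin d) ℝ) *
      diagonal ((↑) ∘ Real.sqrt ∘ h.1.eigenvalues) *
      (star h.1.eigenvectorUnitary : Matrix (Fin d) (Fin d) ℝ)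
  else 0

/-- `σ + iΩ ≥ 0`: the Robertson–Schrödinger condition for a real symmetric matrix `σ`
to be a bona fide covariance matrix. -/
def IsCM (n : ℕ) (σ : Matrix (Fin (2*n)) (Fin (2*n)) ℝ) : Prop :=
  σ.IsSymm ∧
    (σ.map (Complex.ofReal ·) + Complex.I • (Omega n).map (Complex.ofReal ·)).PosSemidef

/-- `ν̃₋²`, the square of the smallest partially transposed symplectic eigenvalue of `σ`, for
the bipartition of the first `l` versus the remaining modes: the smallest eigenvalue of
`σ^{1/2} Ω̃ᵀ σ Ω̃ σ^{1/2}`. -/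
noncomputable def nuSq (n l : ℕ) (σ : Matrix (Fin (2*n)) (Fin (2*n)) ℝ) : ℝ :=
  sInf (spectrum ℝ (msqrt σ * (OmegaPT n l)ᵀ * σ * OmegaPT n l * msqrt σ))

/-- `ν̃₋`, the smallest partially transposed symplectic eigenvalue of `σ`. -/
noncomputable def nuMin (n l : ℕ) (σ : Matrix (Fin (2*n)) (Fin (2*n)) ℝ) : ℝ :=
  Real.sqrt (nuSq n l σ)

/-- The logarithmic negativity `E_N(σ) = max (0, −log₂ ν̃₋)`. -/
noncomputable def logNeg (n l : ℕ) (σ : Matrix (Fin (2*n)) (Fin (2*n)) ℝ) : ℝ :=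
  max 0 (-(Real.logb 2 (nuMin n l σ)))

/-! The matrix `M = [[0, σz], [σz, 0]]` is a symmetric involution, so all the matrices involved
live in the commutative algebra `ℝ[M] ≅ ℝ × ℝ`, where `a • 1 + b • M` has spectrum `{a - b, a + b}`
and is positive semidefinite iff `|b| ≤ a`. In it `σ = cosh 2r • 1 + sinh 2r • M = exp (2r M)`,
whose square root is `S = exp (r M)`. Since `M` anticommutes with `Ω`, `S Ω S = Ω`, so
`σ + iΩ = Sᴴ (1 + iΩ) S ≥ 0`, and `iΩ` is again a Hermitian involution. Since `M` commutes with
`Ω̃`, `σ^{1/2} Ω̃ᵀ σ Ω̃ σ^{1/2} = σ² = exp (4r M)`, with smallest eigenvalue `e^{-4r}`. The Lyapunov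
matrix `2Aσ + D` also lies in `ℝ[M]`; the defining relation of `r` makes the sum of its two
coefficients vanish, and `N ≥ 0` makes their difference nonnegative. -/

section Involution

variable {𝕜 A : Type*} [Field 𝕜] [Ring A] [Algebra 𝕜 A] {Z : A}

theorem smul_one_add_smul_mul_smul_one_add_smul (hZ : Z * Z = 1) (a b a' b' : 𝕜) :
    (a • 1 + b • Z) * (a' • 1 + b' • Z) = (a * a' + b * b') • 1 + (a * b' + b * a') • Z := by
  simp only [add_mul, mul_add, smul_mul_smul, one_mul, mul_one, hZ]
  module

theorem isUnit_smul_one_add_smul_iff (hZ : Z * Z = 1) (h1 : Z ≠ 1) (h2 : Z ≠ -1) (u v : 𝕜) :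
    IsUnit (u • 1 + v • Z) ↔ u * u - v * v ≠ 0 := by
  constructor
  · intro hu huv
    obtain rfl | rfl : u = v ∨ u = -v := mul_self_eq_mul_self_iff.1 (sub_eq_zero.1 huv)
    · refine h1 (sub_eq_zero.1 ((hu.mul_right_eq_zero (b := 1 - Z)).1 ?_)).symm
      simp only [add_mul, mul_sub, smul_mul_assoc, one_mul, mul_one, hZ]
      module
    · refine h2 (eq_neg_of_add_eq_zero_right ((hu.mul_right_eq_zero (b := 1 + Z)).1 ?_))
      simp only [add_mul, mul_add, smul_mul_assoc, one_mul, mul_one, hZ]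
      module
  · intro huv
    refine isUnit_iff_exists.2 ⟨(u * u - v * v)⁻¹ • (u • 1 + (-v) • Z), ?_, ?_⟩
    · rw [mul_smul_comm, smul_one_add_smul_mul_smul_one_add_smul hZ,
        show u * u + v * -v = u * u - v * v by ring, show u * -v + v * u = 0 by ring]
      simp [smul_smul, huv]
    · rw [smul_mul_assoc, smul_one_add_smul_mul_smul_one_add_smul hZ,
        show u * u + -v * v = u * u - v * v by ring, show u * v + -v * u = 0 by ring]
      simp [smul_smul, huv]

theorem spectrum_smul_one_add_smul_of_mul_self_eq_one (hZ : Z * Z = 1) (h1 : Z ≠ 1)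
    (h2 : Z ≠ -1) (a b : 𝕜) : spectrum 𝕜 (a • 1 + b • Z) = {a - b, a + b} := by
  ext x
  rw [spectrum.mem_iff, Algebra.algebraMap_eq_smul_one,
    show x • (1 : A) - (a • 1 + b • Z) = (x - a) • 1 + (-b) • Z by module,
    isUnit_smul_one_add_smul_iff hZ h1 h2, not_not, Set.mem_insert_iff, Set.mem_singleton_iff,
    show (x - a) * (x - a) - -b * -b = (x - (a - b)) * (x - (a + b)) by ring, mul_eq_zero,
    sub_eq_zero, sub_eq_zero]

end Involution

section HermitianInvolution

variable {𝕜 n : Type*} [RCLike 𝕜] [Fintype n] [DecidableEq n] {Z : Matrix n n 𝕜}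

theorem Matrix.posSemidef_one_add_of_mul_self_eq_one (hZ : Z.IsHermitian) (hZZ : Z * Z = 1) :
    (1 + Z).PosSemidef := by
  have h : 1 + Z = (1 / 2 : ℝ) • ((1 + Z)ᴴ * (1 + Z)) := by
    rw [conjTranspose_add, conjTranspose_one, hZ.eq]
    simp only [add_mul, mul_add, one_mul, mul_one, hZZ]
    module
  rw [h]
  exact (posSemidef_conjTranspose_mul_self _).smul (by norm_num)

theorem Matrix.posSemidef_smul_one_add_smul_of_mul_self_eq_one (hZ : Z.IsHermitian)
    (hZZ : Z * Z = 1) {a b : ℝ} (hab : |b| ≤ a) : (a • 1 + b • Z).PosSemidef := by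
  have h : a • 1 + b • Z = ((a + b) / 2) • (1 + Z) + ((a - b) / 2) • (1 + -Z) := by module
  rw [h]
  refine ((posSemidef_one_add_of_mul_self_eq_one hZ hZZ).smul ?_).add
    ((posSemidef_one_add_of_mul_self_eq_one hZ.neg (by rw [neg_mul_neg, hZZ])).smul ?_) <;>
  · linarith [abs_le.1 hab]

end HermitianInvolution

theorem Matrix.posSemidef_one_add_I_smul_map_ofReal {n : Type*} [Fintype n] [DecidableEq n]
    {Ω : Matrix n n ℝ} (hΩ : Ωᵀ = -Ω) (hΩΩ : Ω * Ω = -1) :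
    (1 + Complex.I • Ω.map (Complex.ofReal ·)).PosSemidef := by
  refine posSemidef_one_add_of_mul_self_eq_one ?_ ?_
  · ext i j
    have hji : Ω j i = -Ω i j := congrFun (congrFun hΩ i) j
    simp [hji]
  · have hmap : Ω.map (Complex.ofReal ·) * Ω.map (Complex.ofReal ·) =
        (Ω * Ω).map (Complex.ofReal ·) := (Matrix.map_mul (f := Complex.ofRealHom)).symm
    rw [smul_mul_smul, Complex.I_mul_I, hmap, hΩΩ, Matrix.map_neg _ Complex.ofReal_neg,
      Matrix.map_one _ Complex.ofReal_zero Complex.ofReal_one, neg_one_smul, neg_neg]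

theorem msqrt_eq_of_mul_self_eq {d : ℕ} {S σ : Matrix (Fin d) (Fin d) ℝ} (hS : S.PosSemidef)
    (hSS : S * S = σ) : msqrt σ = S := by
  have hσ : σ.PosSemidef := by
    rw [← hSS]; nth_rw 1 [← hS.1.eq]; exact posSemidef_conjTranspose_mul_self S
  rw [msqrt, dif_pos hσ]
  open MatrixOrder in
  rw [← CFC.sqrt_unique hSS hS.nonneg, CFC.sqrt_eq_real_sqrt σ hσ.nonneg, cfcₙ_eq_cfc,
    hσ.1.cfc_eq]
  simp [Matrix.IsHermitian.cfc, Unitary.conjStarAlgAut_apply, Function.comp_def]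

theorem logNeg_eq_neg_logb_nuMin {n l : ℕ} {σ : Matrix (Fin (2*n)) (Fin (2*n)) ℝ}
    (h : nuMin n l σ ≤ 1) : logNeg n l σ = -Real.logb 2 (nuMin n l σ) :=
  max_eq_right (neg_nonneg.2 (Real.logb_nonpos one_lt_two (Real.sqrt_nonneg _) h))

def twoModeM : Matrix (Fin (2*2)) (Fin (2*2)) ℝ := !![0,0,1,0; 0,0,0,-1; 1,0,0,0; 0,-1,0,0]

theorem Omega_two : Omega 2 = !![0,1,0,0; -1,0,0,0; 0,0,0,1; 0,0,-1,0] := by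
  ext i j
  fin_cases i <;> fin_cases j <;> simp [Omega]

theorem OmegaPT_two_one : OmegaPT 2 1 = !![0,1,0,0; -1,0,0,0; 0,0,0,-1; 0,0,1,0] := by
  ext i j
  fin_cases i <;> fin_cases j <;>
    simp [OmegaPT, Omega_two, Tmat, Matrix.mul_apply, Fin.sum_univ_four]

theorem Omega_two_transpose : (Omega 2)ᵀ = -Omega 2 := by
  rw [Omega_two]
  ext i j
  fin_cases i <;> fin_cases j <;> simp

theorem Omega_two_mul_self : Omega 2 * Omega 2 = -1 := by
  rw [Omega_two]
  ext i j
  fin_cases i <;> fin_cases j <;> simp [Matrix.mul_apply, Fin.sum_univ_four]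

theorem OmegaPT_two_one_transpose_mul_self : (OmegaPT 2 1)ᵀ * OmegaPT 2 1 = 1 := by
  rw [OmegaPT_two_one]
  ext i j
  fin_cases i <;> fin_cases j <;> simp [Matrix.mul_apply, Fin.sum_univ_four]

theorem twoModeM_mul_self : twoModeM * twoModeM = 1 := by
  ext i j
  fin_cases i <;> fin_cases j <;> simp [twoModeM, Matrix.mul_apply, Fin.sum_univ_four]

theorem twoModeM_isHermitian : twoModeM.IsHermitian := by
  ext i j
  fin_cases i <;> fin_cases j <;> simp [twoModeM]

theorem twoModeM_ne_one : twoModeM ≠ 1 := fun h => by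
  simpa [twoModeM] using congrFun (congrFun h 0) 0

theorem twoModeM_ne_neg_one : twoModeM ≠ -1 := fun h => by
  simpa [twoModeM] using congrFun (congrFun h 0) 0

theorem twoModeM_mul_Omega_two : twoModeM * Omega 2 = -(Omega 2 * twoModeM) := by
  rw [Omega_two]
  ext i j
  fin_cases i <;> fin_cases j <;> simp [twoModeM, Matrix.mul_apply, Fin.sum_univ_four]

theorem commute_twoModeM_OmegaPT_two_one : Commute twoModeM (OmegaPT 2 1) := by
  rw [OmegaPT_two_one]
  ext i j
  fin_cases i <;> fin_cases j <;> simp [twoModeM, Matrix.mul_apply, Fin.sum_univ_four]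

theorem smul_one_add_smul_twoModeM (a b : ℝ) :
    a • 1 + b • twoModeM = !![a,0,b,0; 0,a,0,-b; b,0,a,0; 0,-b,0,a] := by
  ext i j
  fin_cases i <;> fin_cases j <;> simp [twoModeM]

theorem det_smul_one_add_smul_twoModeM (a b : ℝ) :
    (a • 1 + b • twoModeM).det = (a ^ 2 - b ^ 2) ^ 2 := by
  rw [smul_one_add_smul_twoModeM, Matrix.det_succ_row_zero]
  simp [Fin.sum_univ_succ, Matrix.det_fin_three, Fin.succAbove]
  ring

noncomputable def twoModeSqueezed (t : ℝ) : Matrix (Fin (2*2)) (Fin (2*2)) ℝ :=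
  Real.cosh t • 1 + Real.sinh t • twoModeM

section TwoModeSqueezed

open Real

theorem twoModeSqueezed_mul (s t : ℝ) :
    twoModeSqueezed s * twoModeSqueezed t = twoModeSqueezed (s + t) := by
  rw [twoModeSqueezed, twoModeSqueezed, twoModeSqueezed,
    smul_one_add_smul_mul_smul_one_add_smul twoModeM_mul_self, cosh_add, sinh_add]
  ring_nf

theorem twoModeSqueezed_zero : twoModeSqueezed 0 = 1 := by simp [twoModeSqueezed]

theorem posSemidef_twoModeSqueezed (t : ℝ) : (twoModeSqueezed t).PosSemidef :=
  posSemidef_smul_one_add_smul_of_mul_self_eq_one twoModeM_isHermitian twoModeM_mul_self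
    (by rw [abs_sinh]; exact (sinh_lt_cosh _).le.trans (cosh_abs t).le)

theorem transpose_twoModeSqueezed (t : ℝ) : (twoModeSqueezed t)ᵀ = twoModeSqueezed t :=
  (posSemidef_twoModeSqueezed t).1.eq

theorem det_twoModeSqueezed (t : ℝ) : (twoModeSqueezed t).det = 1 := by
  rw [twoModeSqueezed, det_smul_one_add_smul_twoModeM, cosh_sq_sub_sinh_sq, one_pow]

theorem spectrum_twoModeSqueezed (t : ℝ) :
    spectrum ℝ (twoModeSqueezed t) = {exp (-t), exp t} := by
  rw [twoModeSqueezed, spectrum_smul_one_add_smul_of_mul_self_eq_one twoModeM_mul_self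
    twoModeM_ne_one twoModeM_ne_neg_one, cosh_sub_sinh, cosh_add_sinh]

theorem msqrt_twoModeSqueezed (t : ℝ) : msqrt (twoModeSqueezed t) = twoModeSqueezed (t / 2) :=
  msqrt_eq_of_mul_self_eq (posSemidef_twoModeSqueezed _) (by rw [twoModeSqueezed_mul, add_halves])

theorem twoModeSqueezed_mul_Omega_two (t : ℝ) :
    twoModeSqueezed t * Omega 2 = Omega 2 * twoModeSqueezed (-t) := by
  rw [twoModeSqueezed, twoModeSqueezed, cosh_neg, sinh_neg, add_mul, mul_add, smul_mul_assoc,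
    smul_mul_assoc, twoModeM_mul_Omega_two, mul_smul_comm, mul_smul_comm]
  simp

theorem twoModeSqueezed_mul_Omega_two_mul (t : ℝ) :
    twoModeSqueezed t * Omega 2 * twoModeSqueezed t = Omega 2 := by
  rw [twoModeSqueezed_mul_Omega_two, mul_assoc, twoModeSqueezed_mul, neg_add_cancel,
    twoModeSqueezed_zero, mul_one]

theorem commute_twoModeSqueezed_OmegaPT_two_one (t : ℝ) :
    Commute (twoModeSqueezed t) (OmegaPT 2 1) :=
  ((Commute.one_left _).smul_left _).add_left (commute_twoModeM_OmegaPT_two_one.smul_left _)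

theorem isCM_twoModeSqueezed (t : ℝ) : IsCM 2 (twoModeSqueezed t) := by
  refine ⟨transpose_twoModeSqueezed t, ?_⟩
  have map_mul' : ∀ X Y : Matrix (Fin (2*2)) (Fin (2*2)) ℝ,
      (X * Y).map (Complex.ofReal ·) = X.map (Complex.ofReal ·) * Y.map (Complex.ofReal ·) :=
    fun X Y => Matrix.map_mul (f := Complex.ofRealHom)
  set S := (twoModeSqueezed (t / 2)).map (Complex.ofReal ·)
  have hS : Sᴴ = S :=
    ((posSemidef_twoModeSqueezed _).1.map _ fun x => (Complex.conj_ofReal x).symm).eq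
  have hsandwich : (twoModeSqueezed t).map (Complex.ofReal ·) +
      Complex.I • (Omega 2).map (Complex.ofReal ·) =
      Sᴴ * (1 + Complex.I • (Omega 2).map (Complex.ofReal ·)) * S := by
    rw [hS, mul_add, add_mul, mul_one, mul_smul_comm, smul_mul_assoc, ← map_mul', ← map_mul',
      ← map_mul', twoModeSqueezed_mul, add_halves, twoModeSqueezed_mul_Omega_two_mul]
  rw [hsandwich]
  exact (posSemidef_one_add_I_smul_map_ofReal Omega_two_transpose
    Omega_two_mul_self).conjTranspose_mul_mul_same _

theorem nuMin_twoModeSqueezed {t : ℝ} (ht : 0 ≤ t) :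
    nuMin 2 1 (twoModeSqueezed t) = exp (-t) := by
  have hprod : msqrt (twoModeSqueezed t) * (OmegaPT 2 1)ᵀ * twoModeSqueezed t * OmegaPT 2 1 *
      msqrt (twoModeSqueezed t) = twoModeSqueezed (2 * t) := by
    rw [msqrt_twoModeSqueezed, mul_assoc _ (twoModeSqueezed t),
      (commute_twoModeSqueezed_OmegaPT_two_one t).eq, ← mul_assoc,
      mul_assoc _ _ (OmegaPT 2 1), OmegaPT_two_one_transpose_mul_self, mul_one,
      twoModeSqueezed_mul, twoModeSqueezed_mul]
    ring_nf
  have hmin : exp (-(2 * t)) ≤ exp (2 * t) := exp_le_exp.2 (by linarith)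
  rw [nuMin, nuSq, hprod, spectrum_twoModeSqueezed, csInf_pair, inf_eq_left.2 hmin,
    show -(2 * t) = -t + -t by ring, exp_add, sqrt_mul_self (exp_pos _).le]

theorem posSemidef_lyapunov_twoModeSqueezed {N χ t : ℝ} (hN : 0 ≤ N) (hχ : χ < 1 / 2)
    (ht : exp t = (1 + 2 * N) / (1 - 2 * χ)) :
    (((-(1 / 2) : ℝ) • 1 + χ • twoModeM) * twoModeSqueezed t +
      twoModeSqueezed t * ((-(1 / 2) : ℝ) • 1 + χ • twoModeM)ᵀ + (1 + 2 * N) • 1).PosSemidef := by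
  set c := cosh t
  set s := sinh t
  have hsum : ((-(1 / 2) : ℝ) • 1 + χ • twoModeM) * twoModeSqueezed t +
      twoModeSqueezed t * ((-(1 / 2) : ℝ) • 1 + χ • twoModeM)ᵀ + (1 + 2 * N) • 1 =
      ((1 + 2 * N) - c + 2 * χ * s) • 1 + (2 * χ * c - s) • twoModeM := by
    rw [transpose_add, transpose_smul, transpose_smul, transpose_one,
      ← conjTranspose_eq_transpose_of_trivial, twoModeM_isHermitian.eq, twoModeSqueezed,
      smul_one_add_smul_mul_smul_one_add_smul twoModeM_mul_self,
      smul_one_add_smul_mul_smul_one_add_smul twoModeM_mul_self]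
    module
  have hN' : 0 < 1 + 2 * N := by linarith
  have hχ' : 0 < 1 - 2 * χ := by linarith
  have hplus : (1 - 2 * χ) * (c + s) = 1 + 2 * N := by
    rw [cosh_add_sinh, ht]; field_simp
  have hminus : (1 + 2 * N) * (c - s) = 1 - 2 * χ := by
    rw [cosh_sub_sinh, exp_neg, ht, inv_div]; field_simp
  have hgap : (1 + 2 * N) * ((1 + 2 * N) - (1 + 2 * χ) * (c - s)) =
      4 * N + 4 * N ^ 2 + 4 * χ ^ 2 := by
    linear_combination (-(1 + 2 * χ)) * hminus
  have hdiff : 0 ≤ (1 + 2 * N) - (1 + 2 * χ) * (c - s) :=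
    (mul_nonneg_iff_of_pos_left hN').1 (hgap ▸ by positivity)
  rw [hsum]
  exact posSemidef_smul_one_add_smul_of_mul_self_eq_one twoModeM_isHermitian twoModeM_mul_self
    (abs_le.2 ⟨by linarith, by linarith⟩)

end TwoModeSqueezed

theorem parametric_system_entanglement_bound_tight_general (N χ r : ℝ) (hN : 0 ≤ N)
    (hχ : χ < 1/2) (hr0 : 0 ≤ r)
    (hr : Real.exp (2*r) = (1 + 2*N)/(1 - 2*χ))
    (M A D σ : Matrix (Fin (2*2)) (Fin (2*2)) ℝ)
    (hM : M = !![0,0,1,0; 0,0,0,-1; 1,0,0,0; 0,-1,0,0])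
    (hA : A = (-(1/2) : ℝ) • 1 + χ • M) (hD : D = (1 + 2*N) • 1)
    (hσ : σ = !![Real.cosh (2*r), 0, Real.sinh (2*r), 0;
                 0, Real.cosh (2*r), 0, -Real.sinh (2*r);
                 Real.sinh (2*r), 0, Real.cosh (2*r), 0;
                 0, -Real.sinh (2*r), 0, Real.cosh (2*r)]) :
    IsCM 2 σ ∧ σ.det = 1 ∧ (A * σ + σ * Aᵀ + D).PosSemidef ∧
      nuMin 2 1 σ = Real.exp (-(2*r)) ∧ nuMin 2 1 σ = (1-2*χ)/(1+2*N) ∧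
      logNeg 2 1 σ = Real.logb 2 (1+2*N) - Real.logb 2 (1-2*χ) := by
  obtain rfl : σ = twoModeSqueezed (2 * r) := by
    rw [hσ, twoModeSqueezed, smul_one_add_smul_twoModeM]
  subst hM hA hD
  have hν := nuMin_twoModeSqueezed (by positivity : 0 ≤ 2 * r)
  have hν' : Real.exp (-(2 * r)) = (1 - 2 * χ) / (1 + 2 * N) := by
    rw [Real.exp_neg, hr, inv_div]
  refine ⟨isCM_twoModeSqueezed _, det_twoModeSqueezed _,
    posSemidef_lyapunov_twoModeSqueezed hN hχ hr, hν, hν.trans hν', ?_⟩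
  rw [logNeg_eq_neg_logb_nuMin (hν ▸ Real.exp_le_one_iff.2 (by linarith)), hν, hν',
    Real.logb_div (by linarith) (by linarith), neg_sub]

/-- **Parametric system, entanglement bound is tight.** With `A = −(1/2)𝟙₄ + χM`,
`D = (1+2N)𝟙₄`, `0 ≤ χ < 1/2` and `e^{2r} = (1+2N)/(1−2χ)` (`r ≥ 0`), the pure two-mode
squeezed covariance matrix with `c = cosh 2r`, `s = sinh 2r` is a covariance matrix with
`det σ = 1` satisfying the stabilising Lyapunov inequality, and has
`ν̃₋ = e^{−2r} = (1−2χ)/(1+2N)` for the 1 vs 1 bipartition; hence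
`E_N(σ) = log₂(1+2N) − log₂(1−2χ)`, saturating the bound. -/
theorem parametric_system_entanglement_bound_tight (N χ r : ℝ) (hN : 0 ≤ N)
    (hχ0 : 0 ≤ χ) (hχ : χ < 1/2) (hr0 : 0 ≤ r)
    (hr : Real.exp (2*r) = (1 + 2*N)/(1 - 2*χ))
    (M A D σ : Matrix (Fin (2*2)) (Fin (2*2)) ℝ)
    (hM : M = !![0,0,1,0; 0,0,0,-1; 1,0,0,0; 0,-1,0,0])
    (hA : A = (-(1/2) : ℝ) • 1 + χ • M) (hD : D = (1 + 2*N) • 1)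
    (hσ : σ = !![Real.cosh (2*r), 0, Real.sinh (2*r), 0;
                 0, Real.cosh (2*r), 0, -Real.sinh (2*r);
                 Real.sinh (2*r), 0, Real.cosh (2*r), 0;
                 0, -Real.sinh (2*r), 0, Real.cosh (2*r)]) :
    IsCM 2 σ ∧ σ.det = 1 ∧ (A * σ + σ * Aᵀ + D).PosSemidef ∧
      nuMin 2 1 σ = Real.exp (-(2*r)) ∧ nuMin 2 1 σ = (1-2*χ)/(1+2*N) ∧
      logNeg 2 1 σ = Real.logb 2 (1+2*N) - Real.logb 2 (1-2*χ) :=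
  parametric_system_entanglement_bound_tight_general N χ r hN hχ hr0 hr M A D σ hM hA hD hσ
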